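/- Let G be a graph on n ≥ 2 vertices, k ≥ 1 and ℓ ≥ 0 integers, and let G' with terminals s, t be the pair-copies graph of G. Then G contains a path P with at least two vertices such that |V(P)| ≤ k and |N_G(V(P))| ≤ ℓ if and only if G' contains an st-path P' with |V(P')| ≤ k + 2 and |N_{G'}(V(P'))| ≤ ℓ + 2(binom(n,2) − 1). -/

import Mathlib

/-!
An `st`-path of `G'` leaves `s` into some copy `G_{vw}` at the copy of `v`, can never leave that
copy again except through the copy of `w` into `t`, so it is a `v`-`w` path of `G` framed by `s`
and `t`. Its open neighbourhood is the copy of the neighbourhood of that path in `G`, together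
with the copies of `v'` and `w'` in each of the other `binom(n,2) - 1` copies `G_{v'w'}`.
Conversely, a path of `G` with at least two vertices, read from its smaller to its larger
endpoint, lifts to such an `st`-path.
-/

open SimpleGraph

def openNbhd {V : Type*} (G : SimpleGraph V) (S : Set V) : Set V :=
  {v | v ∉ S ∧ ∃ w ∈ S, G.Adj v w}

/-- The pair-copies graph `G'` of a graph `G` with a linear order on its vertices:
for every pair `v < w` of vertices of `G` there is a disjoint copy of `G`
(modelled as `Sum.inl (⟨(v, w), _⟩, a)` for `a : V`), together with two new
vertices `s = Sum.inr false` and `t = Sum.inr true`, where `s` is adjacent exactly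
to the copy of `v` in each copy `G_{vw}`, and `t` is adjacent exactly to the copy
of `w` in each copy `G_{vw}`. -/
def pairCopies {V : Type*} [LinearOrder V] (G : SimpleGraph V) :
    SimpleGraph (({q : V × V // q.1 < q.2} × V) ⊕ Bool) :=
  SimpleGraph.fromRel (fun a b =>
    match a, b with
    | Sum.inl (e, a), Sum.inl (e', b) => e = e' ∧ G.Adj a b
    | Sum.inr false, Sum.inl (e, a) => a = e.1.1
    | Sum.inr true, Sum.inl (e, a) => a = e.1.2
    | _, _ => False)

theorem SimpleGraph.Walk.IsPath.two_le_length_support_iff {W : Type*} {H : SimpleGraph W}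
    {u v : W} {p : H.Walk u v} (hp : p.IsPath) : 2 ≤ p.support.length ↔ u ≠ v := by
  rw [Walk.length_support, Nat.succ_le_succ_iff, Nat.one_le_iff_ne_zero, Ne,
    Walk.length_eq_zero_iff]
  exact ⟨fun h huv => h (by subst huv; exact Walk.isPath_iff_nil.1 hp), fun h hnil => h hnil.eq⟩

namespace PairCopies

abbrev Pair (V : Type*) [LinearOrder V] := {q : V × V // q.1 < q.2}

variable {V : Type*} [LinearOrder V] {G : SimpleGraph V}

@[simp] lemma adj_inl_inl {e e' : Pair V} {a b : V} :
    (pairCopies G).Adj (.inl (e, a)) (.inl (e', b)) ↔ e = e' ∧ G.Adj a b := by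
  simp only [pairCopies, fromRel_adj]
  aesop (add safe G.adj_symm)

@[simp] lemma adj_inr_false_inl {e : Pair V} {a : V} :
    (pairCopies G).Adj (.inr false) (.inl (e, a)) ↔ a = e.1.1 := by
  simp [pairCopies]

@[simp] lemma adj_inr_true_inl {e : Pair V} {a : V} :
    (pairCopies G).Adj (.inr true) (.inl (e, a)) ↔ a = e.1.2 := by
  simp [pairCopies]

@[simp] lemma adj_inl_inr_false {e : Pair V} {a : V} :
    (pairCopies G).Adj (.inl (e, a)) (.inr false) ↔ a = e.1.1 := by
  rw [adj_comm, adj_inr_false_inl]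

@[simp] lemma adj_inl_inr_true {e : Pair V} {a : V} :
    (pairCopies G).Adj (.inl (e, a)) (.inr true) ↔ a = e.1.2 := by
  rw [adj_comm, adj_inr_true_inl]

@[simp] lemma not_adj_inr_inr (b c : Bool) : ¬ (pairCopies G).Adj (.inr b) (.inr c) := by
  cases b <;> cases c <;> simp [pairCopies]

variable (G) in
def copy (e : Pair V) : G ↪g pairCopies G where
  toFun a := .inl (e, a)
  inj' := Sum.inl_injective.comp (Prod.mk_right_injective e)
  map_rel_iff' := by simp

@[simp] lemma copy_apply (e : Pair V) (a : V) : copy G e a = .inl (e, a) := rfl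

lemma adj_inr_false_copy (e : Pair V) : (pairCopies G).Adj (.inr false) (copy G e e.1.1) := by
  simp

lemma adj_copy_inr_true (e : Pair V) : (pairCopies G).Adj (copy G e e.1.2) (.inr true) := by
  simp

def stPath (e : Pair V) (w : G.Walk e.1.1 e.1.2) :
    (pairCopies G).Walk (.inr false) (.inr true) :=
  .cons (adj_inr_false_copy e) ((w.map (copy G e).toHom).concat (adj_copy_inr_true e))

lemma support_stPath (e : Pair V) (w : G.Walk e.1.1 e.1.2) :
    (stPath e w).support = .inr false :: (w.support.map (copy G e) ++ [.inr true]) := by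
  rw [stPath, Walk.support_cons, Walk.support_concat, Walk.support_map]
  simp

lemma length_support_stPath (e : Pair V) (w : G.Walk e.1.1 e.1.2) :
    (stPath e w).support.length = w.support.length + 2 := by
  simp [support_stPath]

lemma mem_support_stPath {e : Pair V} {w : G.Walk e.1.1 e.1.2} {x} :
    x ∈ (stPath e w).support ↔
      x = .inr false ∨ x = .inr true ∨ ∃ a ∈ w.support, x = .inl (e, a) := by
  simp only [support_stPath]
  aesop

lemma isPath_stPath_iff {e : Pair V} {w : G.Walk e.1.1 e.1.2} :
    (stPath e w).IsPath ↔ w.IsPath := by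
  simp [Walk.isPath_def, support_stPath, List.nodup_append, List.nodup_map_iff (copy G e).injective]

lemma exists_eq_map_concat :
    ∀ {e : Pair V} {a : V} (q : (pairCopies G).Walk (.inl (e, a)) (.inr true)),
      q.IsPath → .inr false ∉ q.support →
      ∃ w : G.Walk a e.1.2, q = (w.map (copy G e).toHom).concat (adj_copy_inr_true e)
  | e, a, .cons (v := .inl (e', b)) h q, hq, hs => by
    obtain ⟨w, rfl⟩ := exists_eq_map_concat q hq.of_cons (by simp_all)
    obtain ⟨rfl, hab⟩ := adj_inl_inl.1 h
    exact ⟨.cons hab w, rfl⟩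
  | _, _, .cons (v := .inr false) h q, _, hs => by simp at hs
  | e, a, .cons (v := .inr true) h q, hq, _ => by
    obtain rfl : a = e.1.2 := by simpa using h
    obtain rfl : q = .nil := (Walk.isPath_iff_nil.1 hq.of_cons).eq_nil
    exact ⟨.nil, rfl⟩
termination_by _ _ q => q.length

lemma exists_eq_stPath (p : (pairCopies G).Walk (.inr false) (.inr true)) (hp : p.IsPath) :
    ∃ e w, p = stPath e w := by
  match p, hp with
  | .cons (v := .inl (e, a)) h q, hp =>
    obtain rfl : a = e.1.1 := by simpa using h
    obtain ⟨w, rfl⟩ := exists_eq_map_concat q hp.of_cons ((Walk.cons_isPath_iff _ _).1 hp).2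
    exact ⟨e, w, rfl⟩
  | .cons (v := .inr _) h q, _ => simp at h

def endsOfOtherCopies (e : Pair V) : Set (Pair V × V) :=
  {p | p.1 ≠ e ∧ (p.2 = p.1.1.1 ∨ p.2 = p.1.1.2)}

lemma openNbhd_stPath (e : Pair V) (w : G.Walk e.1.1 e.1.2) :
    openNbhd (pairCopies G) {x | x ∈ (stPath e w).support} =
      Sum.inl '' (Prod.mk e '' openNbhd G {x | x ∈ w.support} ∪ endsOfOtherCopies e) := by
  ext (⟨e', b⟩ | b)
  · rcases eq_or_ne e' e with rfl | he
    · simp [openNbhd, mem_support_stPath, endsOfOtherCopies]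
      aesop
    · simp [openNbhd, mem_support_stPath, endsOfOtherCopies, he, he.symm]
  · simp [openNbhd, mem_support_stPath]

lemma card_pair [Fintype V] : Nat.card (Pair V) = (Fintype.card V).choose 2 := by
  rw [Nat.card_eq_fintype_card, Fintype.card_subtype, Fintype.card_product_filter_lt]

lemma ncard_endsOfOtherCopies [Fintype V] (e : Pair V) :
    (endsOfOtherCopies e).ncard = 2 * ((Fintype.card V).choose 2 - 1) := by
  let f (p : Pair V × Bool) : Pair V × V := (p.1, if p.2 then p.1.1.2 else p.1.1.1)
  have hf : f.Injective := by
    rintro ⟨e₁, b₁⟩ ⟨e₂, b₂⟩ h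
    obtain ⟨rfl, h⟩ := Prod.mk.inj h
    cases b₁ <;> cases b₂ <;> simp_all [f, e₁.2.ne, e₁.2.ne']
  have himage : endsOfOtherCopies e = f '' ({e}ᶜ ×ˢ Set.univ) := by
    ext ⟨e', b⟩
    constructor
    · rintro ⟨hne, h | h⟩
      · exact ⟨(e', false), ⟨hne, trivial⟩, by simpa [f] using h.symm⟩
      · exact ⟨(e', true), ⟨hne, trivial⟩, by simpa [f] using h.symm⟩
    · rintro ⟨⟨e'', _ | _⟩, ⟨hne, -⟩, h⟩ <;> cases h
      exacts [⟨hne, .inl rfl⟩, ⟨hne, .inr rfl⟩]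
  rw [himage, Set.ncard_image_of_injective _ hf, Set.ncard_prod, Set.ncard_compl, card_pair]
  simp [mul_comm]

lemma ncard_openNbhd_stPath [Fintype V] (e : Pair V) (w : G.Walk e.1.1 e.1.2) :
    (openNbhd (pairCopies G) {x | x ∈ (stPath e w).support}).ncard =
      (openNbhd G {x | x ∈ w.support}).ncard + 2 * ((Fintype.card V).choose 2 - 1) := by
  have hdisj : Disjoint (Prod.mk e '' openNbhd G {x | x ∈ w.support}) (endsOfOtherCopies e) := by
    rw [Set.disjoint_left]
    rintro _ ⟨a, -, rfl⟩ ⟨hne, -⟩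
    exact hne rfl
  rw [openNbhd_stPath, Set.ncard_image_of_injective _ Sum.inl_injective,
    Set.ncard_union_eq hdisj, Set.ncard_image_of_injective _ (Prod.mk_right_injective e),
    ncard_endsOfOtherCopies]

lemma exists_pair_walk_of_isPath {u v : V} {p : G.Walk u v} (hp : p.IsPath) (huv : u ≠ v) :
    ∃ (e : Pair V) (w : G.Walk e.1.1 e.1.2), w.IsPath ∧ w.support.length = p.support.length ∧
      {x | x ∈ w.support} = {x | x ∈ p.support} := by
  rcases huv.lt_or_gt with h | h
  · exact ⟨⟨(u, v), h⟩, p, hp, rfl, rfl⟩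
  · exact ⟨⟨(v, u), h⟩, p.reverse, hp.reverse, by simp, by ext; simp⟩

end PairCopies

open PairCopies

theorem stmt_9_general {V : Type*} [Fintype V] [LinearOrder V] (G : SimpleGraph V) (k ℓ : ℕ) :
    (∃ (u v : V) (p : G.Walk u v), p.IsPath ∧ 2 ≤ p.support.length ∧
        p.support.length ≤ k ∧ (openNbhd G {x | x ∈ p.support}).ncard ≤ ℓ) ↔
      (∃ p' : (pairCopies G).Walk (Sum.inr false) (Sum.inr true), p'.IsPath ∧
        p'.support.length ≤ k + 2 ∧
        (openNbhd (pairCopies G) {x | x ∈ p'.support}).ncard ≤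
          ℓ + 2 * ((Fintype.card V).choose 2 - 1)) := by
  constructor
  · rintro ⟨u, v, p, hp, htwo, hk, hN⟩
    obtain ⟨e, w, hw, hlen, hsupp⟩ :=
      exists_pair_walk_of_isPath hp (hp.two_le_length_support_iff.1 htwo)
    refine ⟨stPath e w, isPath_stPath_iff.2 hw, ?_, ?_⟩
    · rw [length_support_stPath]
      omega
    · rw [ncard_openNbhd_stPath, hsupp]
      omega
  · rintro ⟨p, hp, hk, hN⟩
    obtain ⟨e, w, rfl⟩ := exists_eq_stPath p hp
    have hw := isPath_stPath_iff.1 hp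
    rw [length_support_stPath] at hk
    rw [ncard_openNbhd_stPath] at hN
    exact ⟨_, _, w, hw, hw.two_le_length_support_iff.2 e.2.ne, by omega, by omega⟩

/-- `G` contains a path `P` with at least two vertices such that `|V(P)| ≤ k` and
`|N_G(V(P))| ≤ ℓ` iff the pair-copies graph `G'` contains an `st`-path `P'` with
`|V(P')| ≤ k + 2` and `|N_{G'}(V(P'))| ≤ ℓ + 2(binom(n,2) − 1)`. -/
theorem stmt_9 {V : Type*} [Fintype V] [LinearOrder V] (G : SimpleGraph V)
    (hn : 2 ≤ Fintype.card V) (k ℓ : ℕ) (hk : 1 ≤ k) :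
    (∃ (u v : V) (p : G.Walk u v), p.IsPath ∧ 2 ≤ p.support.length ∧
        p.support.length ≤ k ∧ (openNbhd G {x | x ∈ p.support}).ncard ≤ ℓ) ↔
      (∃ p' : (pairCopies G).Walk (Sum.inr false) (Sum.inr true), p'.IsPath ∧
        p'.support.length ≤ k + 2 ∧
        (openNbhd (pairCopies G) {x | x ∈ p'.support}).ncard ≤
          ℓ + 2 * ((Fintype.card V).choose 2 - 1)) :=
  stmt_9_general G k ℓ
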